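/- Let T_r be a rooted tree whose internal nodes are assigned probabilities P(u) > 0. Define edge weights on T by w_uv = -log(sqrt(P(u)/P(v))) when u is the parent of v (treating P(leaf) = 1). Then for any two leaves i, j, the product of exp(-w_e) over edges e on the path from i to j equals P(i ∧ j), where i ∧ j is their nearest common ancestor; equivalently exp(-d(i,j)) = P(i ∧ j). -/
import Mathlib


open SimpleGraph

/-- The unique path between two vertices of a tree. -/
noncomputable def treePath {V : Type*} (G : SimpleGraph V) (hG : G.IsTree) (u v : V) :
    G.Walk u v :=
  (hG.existsUnique_path u v).exists.choose

/-- The weighted path distance in a tree. -/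
noncomputable def treeDist {V : Type*} (G : SimpleGraph V) (hG : G.IsTree)
    (w : Sym2 V → ℝ) (u v : V) : ℝ :=
  ((treePath G hG u v).edges.map w).sum

lemma treePath_isPath {V : Type*} (G : SimpleGraph V) (hG : G.IsTree) (u v : V) :
    (treePath G hG u v).IsPath :=
  (hG.existsUnique_path u v).exists.choose_spec

lemma eq_treePath {V : Type*} {G : SimpleGraph V} (hG : G.IsTree) {u v : V}
    {p : G.Walk u v} (hp : p.IsPath) : p = treePath G hG u v :=
  (hG.existsUnique_path u v).unique hp (treePath_isPath G hG u v)

lemma exp_neg_list_sum (l : List ℝ) :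
    Real.exp (-(l.sum)) = (l.map fun x => Real.exp (-x)).prod := by
  induction l with
  | nil => simp
  | cons x xs ih => simp [Real.exp_add, ← ih, neg_add, List.sum_cons, mul_comm]

section Tele

variable {V : Type*} [Fintype V] [DecidableEq V]
    (G : SimpleGraph V) [DecidableRel G.Adj] (hG : G.IsTree)
    (P : V → ℝ) (hPpos : ∀ u, 0 < P u)
    (w : Sym2 V → ℝ)

include hPpos

lemma tele {x y : V} (p : G.Walk x y) :
    (∀ u v, G.Adj u v → u ∈ (treePath G hG v y).support →
      w s(u, v) = -Real.log (Real.sqrt (P u / P v))) → p.IsPath →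
    ((p.edges.map fun e => Real.exp (-(w e))).prod
      = Real.sqrt (P y) / Real.sqrt (P x)) := by
  induction p with
  | nil =>
    intro _ _
    simp only [SimpleGraph.Walk.edges_nil, List.map_nil, List.prod_nil]
    exact (div_self (ne_of_gt (Real.sqrt_pos.2 (hPpos _)))).symm
  | @cons x z y h q ih =>
    intro hw hp
    have hq : q.IsPath := hp.of_cons
    have hmem : z ∈ (treePath G hG x y).support := by
      rw [← eq_treePath hG hp]
      simp [SimpleGraph.Walk.support_cons, q.start_mem_support]
    have hwxz : w s(x, z) = -Real.log (Real.sqrt (P z / P x)) := by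
      rw [Sym2.eq_swap]
      exact hw z x h.symm hmem
    have hsq : Real.sqrt (P z / P x) = Real.sqrt (P z) / Real.sqrt (P x) :=
      Real.sqrt_div (hPpos z).le _
    have hpos : 0 < Real.sqrt (P z) / Real.sqrt (P x) :=
      div_pos (Real.sqrt_pos.2 (hPpos z)) (Real.sqrt_pos.2 (hPpos x))
    have hexp : Real.exp (-(w s(x, z))) = Real.sqrt (P z) / Real.sqrt (P x) := by
      rw [hwxz, neg_neg, hsq, Real.exp_log hpos]
    rw [SimpleGraph.Walk.edges_cons, List.map_cons, List.prod_cons, hexp, ih hw hq]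
    have hz : Real.sqrt (P z) ≠ 0 := ne_of_gt (Real.sqrt_pos.2 (hPpos z))
    have hx : Real.sqrt (P x) ≠ 0 := ne_of_gt (Real.sqrt_pos.2 (hPpos x))
    field_simp

lemma prefix_prod (r : V)
    (hw : ∀ u v, G.Adj u v → u ∈ (treePath G hG v r).support →
      w s(u, v) = -Real.log (Real.sqrt (P u / P v)))
    {x a : V} (ha : a ∈ (treePath G hG x r).support) :
    ((((treePath G hG x r).takeUntil a ha).edges.map fun e => Real.exp (-(w e))).prod
      = Real.sqrt (P a) / Real.sqrt (P x)) := by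
  set p := treePath G hG x r with hp
  have hpp : p.IsPath := treePath_isPath G hG x r
  have hfull : ((p.edges.map fun e => Real.exp (-(w e))).prod
      = Real.sqrt (P r) / Real.sqrt (P x)) := tele G hG P hPpos w p hw hpp
  have hdrop : (((p.dropUntil a ha).edges.map fun e => Real.exp (-(w e))).prod
      = Real.sqrt (P r) / Real.sqrt (P a)) :=
    tele G hG P hPpos w _ hw (hpp.dropUntil ha)
  have hsplit : (((p.takeUntil a ha).edges.map fun e => Real.exp (-(w e))).prod)
        * (Real.sqrt (P r) / Real.sqrt (P a)) = Real.sqrt (P r) / Real.sqrt (P x) := by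
    rw [← hdrop, ← hfull]
    conv_rhs => rw [← p.take_spec ha]
    rw [SimpleGraph.Walk.edges_append, List.map_append, List.prod_append]
  have hr : Real.sqrt (P r) ≠ 0 := ne_of_gt (Real.sqrt_pos.2 (hPpos r))
  have ha' : Real.sqrt (P a) ≠ 0 := ne_of_gt (Real.sqrt_pos.2 (hPpos a))
  have hx : Real.sqrt (P x) ≠ 0 := ne_of_gt (Real.sqrt_pos.2 (hPpos x))
  have := eq_div_of_mul_eq (div_ne_zero hr ha') hsplit
  rw [this]
  field_simp

end Tele

/-- HRG as a T-Stochastic Graph: in a tree rooted at `r`, assign to each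
node a probability `P(u) > 0`, with `P = 1` at leaves, and define edge weights
`w_{uv} = -log √(P(u)/P(v))` when `u` is the parent of `v` (i.e. `u` is adjacent to `v` and
lies on the path from `v` to the root).  Then for any two leaves `i, j`, the product of
`exp(-w_e)` over the edges `e` of the path from `i` to `j` equals `P(i ∧ j)`; equivalently
`exp(-d(i,j)) = P(i ∧ j)`, where `i ∧ j` is the nearest common ancestor of `i` and `j`. -/
theorem hrg_is_tsg {V : Type*} [Fintype V] [DecidableEq V]
    (G : SimpleGraph V) [DecidableRel G.Adj] (hG : G.IsTree) (r : V)
    (P : V → ℝ) (hPpos : ∀ u, 0 < P u) (hPleaf : ∀ v, G.degree v = 1 → P v = 1)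
    (w : Sym2 V → ℝ)
    (hw : ∀ u v, G.Adj u v → u ∈ (treePath G hG v r).support →
      w s(u, v) = -Real.log (Real.sqrt (P u / P v)))
    (i j a : V) (hi : G.degree i = 1) (hj : G.degree j = 1)
    (ha_ij : a ∈ (treePath G hG i j).support)
    (ha_ir : a ∈ (treePath G hG i r).support)
    (ha_jr : a ∈ (treePath G hG j r).support) :
    ((treePath G hG i j).edges.map fun e => Real.exp (-(w e))).prod = P a ∧
    Real.exp (-(treeDist G hG w i j)) = P a := by
  set p := treePath G hG i j with hpdef
  have hpp : p.IsPath := treePath_isPath G hG i j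
  set q₁ := p.takeUntil a ha_ij with hq₁
  set q₂ := p.dropUntil a ha_ij with hq₂
  have hq₁p : q₁.IsPath := hpp.takeUntil ha_ij
  have hq₂p : q₂.IsPath := hpp.dropUntil ha_ij
  have h1 : q₁ = (treePath G hG i r).takeUntil a ha_ir :=
    (eq_treePath hG hq₁p).trans (eq_treePath hG ((treePath_isPath G hG i r).takeUntil ha_ir)).symm
  have h2 : q₂.reverse = (treePath G hG j r).takeUntil a ha_jr :=
    (eq_treePath hG hq₂p.reverse).trans
      (eq_treePath hG ((treePath_isPath G hG j r).takeUntil ha_jr)).symm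
  have prod1 : ((q₁.edges.map fun e => Real.exp (-(w e))).prod = Real.sqrt (P a)) := by
    rw [h1, prefix_prod G hG P hPpos w r hw ha_ir, hPleaf i hi, Real.sqrt_one, div_one]
  have prod2 : ((q₂.edges.map fun e => Real.exp (-(w e))).prod = Real.sqrt (P a)) := by
    have h3 : ((q₂.reverse.edges.map fun e => Real.exp (-(w e))).prod = Real.sqrt (P a)) := by
      rw [h2, prefix_prod G hG P hPpos w r hw ha_jr, hPleaf j hj, Real.sqrt_one, div_one]
    rwa [SimpleGraph.Walk.edges_reverse, List.map_reverse, List.prod_reverse] at h3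
  have hmain : ((p.edges.map fun e => Real.exp (-(w e))).prod = P a) := by
    conv_lhs => rw [← p.take_spec ha_ij]
    rw [SimpleGraph.Walk.edges_append, List.map_append, List.prod_append, ← hq₁, ← hq₂,
      prod1, prod2, Real.mul_self_sqrt (hPpos a).le]
  refine ⟨hmain, ?_⟩
  rw [treeDist, exp_neg_list_sum, List.map_map]
  exact hmain
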